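/- If ψ denotes shortest-path cost in the base graph and W denotes the CJSG edge cost W_{ij,wk} = min{supported cost (if applicable), ψ_{i,w} + ψ_{j,k}}, then the shortest-path cost between any two critical joint states in the fully connected CJSG is at most the JSG shortest-path cost between those joint states. -/
import Mathlib


open scoped Classical

variable {V : Type}

/-- A path from `a` to `b` given as a list of edges (vertex pairs). -/
def IsPath (adj : V → V → Prop) : V → V → List (V × V) → Prop
  | a, b, [] => a = b
  | a, b, e :: p => e.1 = a ∧ adj e.1 e.2 ∧ IsPath adj e.2 b p

/-- Cost of a path: sum of its edge costs. -/
noncomputable def pathCost (c : V → V → ℝ) (p : List (V × V)) : ℝ :=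
  (p.map fun e => c e.1 e.2).sum

/-- ψ a b : minimum cost to move from a to b on the base graph. -/
noncomputable def psi (adj : V → V → Prop) (c : V → V → ℝ) (a b : V) : ℝ :=
  sInf {x | ∃ p, IsPath adj a b p ∧ pathCost c p = x}

/-- The base graph is strongly connected. -/
def StronglyConnected (adj : V → V → Prop) : Prop :=
  ∀ a b : V, ∃ p, IsPath adj a b p

/-- JSG adjacency: each agent either stays at its node or moves along an edge. -/
def jsgAdj (adj : V → V → Prop) (s t : V × V) : Prop :=
  (t.1 = s.1 ∨ adj s.1 t.1) ∧ (t.2 = s.2 ∨ adj s.2 t.2)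

/-- Support-aware JSG edge cost (Algorithm 1): if one agent stays at a support
node of the risky edge the other traverses, the cost is
`min {c, c̄ + c_s}`; otherwise costs of individual moves are summed. -/
noncomputable def jsgCost (c cbar : V → V → ℝ) (cs : ℝ) (Z : V → V → Set V)
    (s t : V × V) : ℝ :=
  if s.1 = t.1 ∧ s.2 = t.2 then 0
  else if s.1 = t.1 then
    (if s.1 ∈ Z s.2 t.2 then min (c s.2 t.2) (cbar s.2 t.2 + cs) else c s.2 t.2)
  else if s.2 = t.2 then
    (if s.2 ∈ Z s.1 t.1 then min (c s.1 t.1) (cbar s.1 t.1 + cs) else c s.1 t.1)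
  else c s.1 t.1 + c s.2 t.2

/-- Cost Q(u) of a joint path u in the JSG. -/
noncomputable def Q (c cbar : V → V → ℝ) (cs : ℝ) (Z : V → V → Set V)
    (u : List ((V × V) × (V × V))) : ℝ :=
  (u.map fun e => jsgCost c cbar cs Z e.1 e.2).sum

/-- Shortest-path cost in the JSG between two joint states. -/
noncomputable def jsgDist (adj : V → V → Prop) (c cbar : V → V → ℝ) (cs : ℝ)
    (Z : V → V → Set V) (s t : V × V) : ℝ :=
  sInf {x | ∃ u, IsPath (jsgAdj adj) s t u ∧ Q c cbar cs Z u = x}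

/-- A risky edge: an edge with a nonempty support set. -/
def Risky (adj : V → V → Prop) (Z : V → V → Set V) (i j : V) : Prop :=
  adj i j ∧ (Z i j).Nonempty

/-- Critical joint states: joint states where a supporting behavior
can be initiated or completed. -/
def Critical (adj : V → V → Prop) (Z : V → V → Set V) (s : V × V) : Prop :=
  ∃ i j k, Risky adj Z i j ∧ k ∈ Z i j ∧
    (s = (k, i) ∨ s = (k, j) ∨ s = (i, k) ∨ s = (j, k))

/-- Node set of the CJSG: all critical joint states plus start and goal. -/
def Mset (adj : V → V → Prop) (Z : V → V → Set V) (vstart vgoal : V) :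
    Set (V × V) :=
  {s | Critical adj Z s} ∪ {(vstart, vstart), (vgoal, vgoal)}

/-- The CJSG is fully connected on its node set. -/
def cjsgAdj (adj : V → V → Prop) (Z : V → V → Set V) (vstart vgoal : V)
    (s t : V × V) : Prop :=
  s ∈ Mset adj Z vstart vgoal ∧ t ∈ Mset adj Z vstart vgoal

/-- CJSG edge cost (Algorithm 2): supported cost when applicable, vs the
decoupled two-agent shortest-path cost `R = ψ + ψ`. -/
noncomputable def W (adj : V → V → Prop) (c cbar : V → V → ℝ) (cs : ℝ)
    (Z : V → V → Set V) (s t : V × V) : ℝ :=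
  if s.1 = t.1 ∧ adj s.2 t.2 ∧ s.1 ∈ Z s.2 t.2 then
    min (cbar s.2 t.2 + cs) (psi adj c s.1 t.1 + psi adj c s.2 t.2)
  else if s.2 = t.2 ∧ adj s.1 t.1 ∧ s.2 ∈ Z s.1 t.1 then
    min (cbar s.1 t.1 + cs) (psi adj c s.1 t.1 + psi adj c s.2 t.2)
  else psi adj c s.1 t.1 + psi adj c s.2 t.2

/-- Cost of a path on the CJSG. -/
noncomputable def Wcost (adj : V → V → Prop) (c cbar : V → V → ℝ) (cs : ℝ)
    (Z : V → V → Set V) (u : List ((V × V) × (V × V))) : ℝ :=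
  (u.map fun e => W adj c cbar cs Z e.1 e.2).sum

/-- Optimal joint-path cost Q(u*) on the JSG from start to goal. -/
noncomputable def Qstar (adj : V → V → Prop) (c cbar : V → V → ℝ) (cs : ℝ)
    (Z : V → V → Set V) (vstart vgoal : V) : ℝ :=
  jsgDist adj c cbar cs Z (vstart, vstart) (vgoal, vgoal)

/-- Optimal path cost obtained by planning on the CJSG from start to goal. -/
noncomputable def cjsgOpt (adj : V → V → Prop) (c cbar : V → V → ℝ) (cs : ℝ)
    (Z : V → V → Set V) (vstart vgoal : V) : ℝ :=
  sInf {x | ∃ u, IsPath (cjsgAdj adj Z vstart vgoal)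
    (vstart, vstart) (vgoal, vgoal) u ∧ Wcost adj c cbar cs Z u = x}

/-- Shortest-path cost between two joint states on the CJSG. -/
noncomputable def cjsgDist (adj : V → V → Prop) (c cbar : V → V → ℝ) (cs : ℝ)
    (Z : V → V → Set V) (vstart vgoal : V) (s t : V × V) : ℝ :=
  sInf {x | ∃ u, IsPath (cjsgAdj adj Z vstart vgoal) s t u ∧
    Wcost adj c cbar cs Z u = x}

section Aux

variable {V : Type}

lemma pathCost_nonneg (c : V → V → ℝ) (hc : ∀ i j, 0 ≤ c i j) (p : List (V × V)) :
    0 ≤ pathCost c p := by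
  induction p with
  | nil => simp [pathCost]
  | cons e q ih => simpa [pathCost] using add_nonneg (hc e.1 e.2) (by simpa [pathCost] using ih)

lemma isPath_append {adj : V → V → Prop} :
    ∀ {p q : List (V × V)} {a b d : V}, IsPath adj a b p → IsPath adj b d q →
      IsPath adj a d (p ++ q) := by
  intro p
  induction p with
  | nil => intro q a b d hp hq; cases hp; simpa using hq
  | cons e r ih =>
      intro q a b d hp hq
      obtain ⟨h1, h2, h3⟩ := hp
      exact ⟨h1, h2, ih h3 hq⟩

lemma psiSet_nonempty {adj : V → V → Prop} (c : V → V → ℝ)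
    (hconn : StronglyConnected adj) (a b : V) :
    {x | ∃ p, IsPath adj a b p ∧ pathCost c p = x}.Nonempty := by
  obtain ⟨p, hp⟩ := hconn a b
  exact ⟨pathCost c p, p, hp, rfl⟩

lemma psiSet_bdd {adj : V → V → Prop} (c : V → V → ℝ) (hc : ∀ i j, 0 ≤ c i j) (a b : V) :
    BddBelow {x | ∃ p, IsPath adj a b p ∧ pathCost c p = x} := by
  refine ⟨0, ?_⟩
  rintro x ⟨p, hp, rfl⟩
  exact pathCost_nonneg c hc p

lemma psi_le {adj : V → V → Prop} {c : V → V → ℝ} (hc : ∀ i j, 0 ≤ c i j)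
    {a b : V} {p : List (V × V)} (hp : IsPath adj a b p) :
    psi adj c a b ≤ pathCost c p :=
  csInf_le (psiSet_bdd c hc a b) ⟨p, hp, rfl⟩

lemma psi_nonneg {adj : V → V → Prop} {c : V → V → ℝ}
    (hconn : StronglyConnected adj) (hc : ∀ i j, 0 ≤ c i j) (a b : V) :
    0 ≤ psi adj c a b :=
  le_csInf (psiSet_nonempty c hconn a b) (by rintro x ⟨p, hp, rfl⟩; exact pathCost_nonneg c hc p)

lemma psi_self {adj : V → V → Prop} {c : V → V → ℝ}
    (hconn : StronglyConnected adj) (hc : ∀ i j, 0 ≤ c i j) (a : V) :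
    psi adj c a a = 0 := by
  have h1 : psi adj c a a ≤ pathCost c ([] : List (V × V)) := psi_le hc (by simp [IsPath])
  simp [pathCost] at h1
  exact le_antisymm h1 (psi_nonneg hconn hc a a)

lemma psi_le_c {adj : V → V → Prop} {c : V → V → ℝ} (hc : ∀ i j, 0 ≤ c i j)
    {a b : V} (hadj : adj a b) : psi adj c a b ≤ c a b := by
  have := psi_le hc (adj := adj) (a := a) (b := b) (p := [(a, b)]) ⟨rfl, hadj, rfl⟩
  simpa [pathCost] using this

lemma psi_triangle {adj : V → V → Prop} {c : V → V → ℝ}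
    (hconn : StronglyConnected adj) (hc : ∀ i j, 0 ≤ c i j) (a b d : V) :
    psi adj c a d ≤ psi adj c a b + psi adj c b d := by
  have key : ∀ x ∈ {x | ∃ p, IsPath adj a b p ∧ pathCost c p = x},
      ∀ y ∈ {x | ∃ p, IsPath adj b d p ∧ pathCost c p = x},
      psi adj c a d ≤ x + y := by
    rintro x ⟨p, hp, rfl⟩ y ⟨q, hq, rfl⟩
    have h := psi_le hc (isPath_append hp hq)
    have : pathCost c (p ++ q) = pathCost c p + pathCost c q := by
      simp [pathCost]
    linarith
  have h2 : ∀ y ∈ {x | ∃ p, IsPath adj b d p ∧ pathCost c p = x},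
      psi adj c a d - psi adj c a b ≤ y := by
    intro y hy
    have h3 := le_csInf (psiSet_nonempty c hconn a b)
      (fun x hx => by have := key x hx y hy; linarith : ∀ x ∈ _, psi adj c a d - y ≤ x)
    rw [show sInf {x | ∃ p, IsPath adj a b p ∧ pathCost c p = x} = psi adj c a b from rfl]
      at h3
    linarith
  have h4 := le_csInf (psiSet_nonempty c hconn b d) h2
  rw [show sInf {x | ∃ p, IsPath adj b d p ∧ pathCost c p = x} = psi adj c b d from rfl]
    at h4
  linarith

variable (adj : V → V → Prop) (c cbar : V → V → ℝ) (cs : ℝ) (Z : V → V → Set V)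

lemma W_le_psipsi (s t : V × V) :
    W adj c cbar cs Z s t ≤ psi adj c s.1 t.1 + psi adj c s.2 t.2 := by
  unfold W
  split_ifs <;> simp [min_le_right]

lemma W_nonneg (hconn : StronglyConnected adj) (hc : ∀ i j, 0 ≤ c i j)
    (hcbar : ∀ i j, 0 ≤ cbar i j) (hcs : 0 ≤ cs) (s t : V × V) :
    0 ≤ W adj c cbar cs Z s t := by
  have h1 := psi_nonneg hconn hc s.1 t.1
  have h2 := psi_nonneg hconn hc s.2 t.2
  unfold W
  split_ifs
  · exact le_min (by linarith [hcbar s.2 t.2]) (by linarith)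
  · exact le_min (by linarith [hcbar s.1 t.1]) (by linarith)
  · linarith

lemma Wcost_nonneg (hconn : StronglyConnected adj) (hc : ∀ i j, 0 ≤ c i j)
    (hcbar : ∀ i j, 0 ≤ cbar i j) (hcs : 0 ≤ cs) (u : List ((V × V) × (V × V))) :
    0 ≤ Wcost adj c cbar cs Z u := by
  induction u with
  | nil => simp [Wcost]
  | cons e q ih =>
      have := W_nonneg adj c cbar cs Z hconn hc hcbar hcs e.1 e.2
      simp only [Wcost, List.map_cons, List.sum_cons] at *
      linarith

end Aux
section Aux2

variable {V : Type}
variable (adj : V → V → Prop) (c cbar : V → V → ℝ) (cs : ℝ) (Z : V → V → Set V)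
variable (vstart vgoal : V)

lemma cjsgSet_bdd (hconn : StronglyConnected adj) (hc : ∀ i j, 0 ≤ c i j)
    (hcbar : ∀ i j, 0 ≤ cbar i j) (hcs : 0 ≤ cs) (s t : V × V) :
    BddBelow {x | ∃ u, IsPath (cjsgAdj adj Z vstart vgoal) s t u ∧
      Wcost adj c cbar cs Z u = x} := by
  refine ⟨0, ?_⟩
  rintro x ⟨u, hu, rfl⟩
  exact Wcost_nonneg adj c cbar cs Z hconn hc hcbar hcs u

lemma cjsgSet_nonempty (s t : V × V) (hs : s ∈ Mset adj Z vstart vgoal)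
    (ht : t ∈ Mset adj Z vstart vgoal) :
    {x | ∃ u, IsPath (cjsgAdj adj Z vstart vgoal) s t u ∧
      Wcost adj c cbar cs Z u = x}.Nonempty :=
  ⟨Wcost adj c cbar cs Z [(s, t)], [(s, t)], ⟨rfl, ⟨hs, ht⟩, rfl⟩, rfl⟩

lemma cjsgDist_le_W (hconn : StronglyConnected adj) (hc : ∀ i j, 0 ≤ c i j)
    (hcbar : ∀ i j, 0 ≤ cbar i j) (hcs : 0 ≤ cs) (s t : V × V)
    (hs : s ∈ Mset adj Z vstart vgoal) (ht : t ∈ Mset adj Z vstart vgoal) :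
    cjsgDist adj c cbar cs Z vstart vgoal s t ≤ W adj c cbar cs Z s t := by
  have hmem : W adj c cbar cs Z s t ∈ {x | ∃ u, IsPath (cjsgAdj adj Z vstart vgoal) s t u ∧
      Wcost adj c cbar cs Z u = x} := by
    refine ⟨[(s, t)], ⟨rfl, ⟨hs, ht⟩, rfl⟩, ?_⟩
    simp [Wcost]
  exact csInf_le (cjsgSet_bdd adj c cbar cs Z vstart vgoal hconn hc hcbar hcs s t) hmem

lemma cjsgDist_triangle (hconn : StronglyConnected adj) (hc : ∀ i j, 0 ≤ c i j)
    (hcbar : ∀ i j, 0 ≤ cbar i j) (hcs : 0 ≤ cs) (s w m' : V × V)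
    (hs : s ∈ Mset adj Z vstart vgoal) (hw : w ∈ Mset adj Z vstart vgoal)
    (hm' : m' ∈ Mset adj Z vstart vgoal) :
    cjsgDist adj c cbar cs Z vstart vgoal s m' ≤
      W adj c cbar cs Z s w + cjsgDist adj c cbar cs Z vstart vgoal w m' := by
  have key : ∀ x ∈ {x | ∃ u, IsPath (cjsgAdj adj Z vstart vgoal) w m' u ∧
      Wcost adj c cbar cs Z u = x},
      cjsgDist adj c cbar cs Z vstart vgoal s m' ≤ W adj c cbar cs Z s w + x := by
    rintro x ⟨u, hu, rfl⟩
    have hmem : W adj c cbar cs Z s w + Wcost adj c cbar cs Z u ∈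
        {x | ∃ u, IsPath (cjsgAdj adj Z vstart vgoal) s m' u ∧
          Wcost adj c cbar cs Z u = x} := by
      refine ⟨(s, w) :: u, ⟨rfl, ⟨hs, hw⟩, hu⟩, ?_⟩
      simp [Wcost]
    exact csInf_le (cjsgSet_bdd adj c cbar cs Z vstart vgoal hconn hc hcbar hcs s m') hmem
  have h2 := le_csInf (cjsgSet_nonempty adj c cbar cs Z vstart vgoal w m' hw hm')
    (fun x hx => by have := key x hx; linarith :
      ∀ x ∈ _, cjsgDist adj c cbar cs Z vstart vgoal s m' - W adj c cbar cs Z s w ≤ x)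
  unfold cjsgDist at *
  linarith

lemma supported1_critical {a t : V × V} (h1 : a.1 = t.1) (h2 : adj a.2 t.2)
    (h3 : a.1 ∈ Z a.2 t.2) :
    Critical adj Z a ∧ Critical adj Z t := by
  constructor
  · exact ⟨a.2, t.2, a.1, ⟨h2, ⟨a.1, h3⟩⟩, h3, Or.inl rfl⟩
  · exact ⟨a.2, t.2, t.1, ⟨h2, ⟨a.1, h3⟩⟩, h1 ▸ h3, Or.inr (Or.inl rfl)⟩

lemma supported2_critical {a t : V × V} (h1 : a.2 = t.2) (h2 : adj a.1 t.1)
    (h3 : a.2 ∈ Z a.1 t.1) :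
    Critical adj Z a ∧ Critical adj Z t := by
  constructor
  · exact ⟨a.1, t.1, a.2, ⟨h2, ⟨a.2, h3⟩⟩, h3, Or.inr (Or.inr (Or.inl rfl))⟩
  · exact ⟨a.1, t.1, t.2, ⟨h2, ⟨a.2, h3⟩⟩, h1 ▸ h3, Or.inr (Or.inr (Or.inr rfl))⟩

end Aux2
section Aux3

variable {V : Type}
variable (adj : V → V → Prop) (c cbar : V → V → ℝ) (cs : ℝ) (Z : V → V → Set V)

lemma W_le_jsgCost_supported1 (hconn : StronglyConnected adj) (hc : ∀ i j, 0 ≤ c i j)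
    {a t : V × V} (hne : a ≠ t) (h1 : a.1 = t.1) (h2 : adj a.2 t.2)
    (h3 : a.1 ∈ Z a.2 t.2) :
    W adj c cbar cs Z a t ≤ jsgCost c cbar cs Z a t := by
  have hne2 : a.2 ≠ t.2 := fun h => hne (Prod.ext h1 h)
  have hW : W adj c cbar cs Z a t =
      min (cbar a.2 t.2 + cs) (psi adj c a.1 t.1 + psi adj c a.2 t.2) := by
    unfold W; rw [if_pos ⟨h1, h2, h3⟩]
  have hJ : jsgCost c cbar cs Z a t = min (c a.2 t.2) (cbar a.2 t.2 + cs) := by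
    unfold jsgCost
    rw [if_neg (fun h => hne2 h.2), if_pos h1, if_pos h3]
  rw [hW, hJ]
  refine le_min ?_ (min_le_left _ _)
  calc min (cbar a.2 t.2 + cs) (psi adj c a.1 t.1 + psi adj c a.2 t.2) ≤
      psi adj c a.1 t.1 + psi adj c a.2 t.2 := min_le_right _ _
    _ ≤ c a.2 t.2 := by
        rw [h1, psi_self hconn hc]
        simpa using psi_le_c hc h2

lemma W_le_jsgCost_supported2 (hconn : StronglyConnected adj) (hc : ∀ i j, 0 ≤ c i j)
    {a t : V × V} (hne : a ≠ t) (h1 : a.2 = t.2) (h2 : adj a.1 t.1)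
    (h3 : a.2 ∈ Z a.1 t.1) :
    W adj c cbar cs Z a t ≤ jsgCost c cbar cs Z a t := by
  have hne1 : a.1 ≠ t.1 := fun h => hne (Prod.ext h h1)
  have hW : W adj c cbar cs Z a t ≤
      min (cbar a.1 t.1 + cs) (psi adj c a.1 t.1 + psi adj c a.2 t.2) := by
    unfold W
    rw [if_neg (fun h => hne1 h.1), if_pos ⟨h1, h2, h3⟩]
  have hJ : jsgCost c cbar cs Z a t = min (c a.1 t.1) (cbar a.1 t.1 + cs) := by
    unfold jsgCost
    rw [if_neg (fun h => hne1 h.1), if_neg hne1, if_pos h1, if_pos h3]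
  rw [hJ]
  refine le_trans hW (le_min ?_ (min_le_left _ _))
  calc min (cbar a.1 t.1 + cs) (psi adj c a.1 t.1 + psi adj c a.2 t.2) ≤
      psi adj c a.1 t.1 + psi adj c a.2 t.2 := min_le_right _ _
    _ ≤ c a.1 t.1 := by
        rw [h1, psi_self hconn hc]
        simpa using psi_le_c hc h2

lemma psipsi_le_jsgCost (hconn : StronglyConnected adj) (hc : ∀ i j, 0 ≤ c i j)
    {a t : V × V} (hadj : jsgAdj adj a t)
    (hn1 : ¬(a.1 = t.1 ∧ adj a.2 t.2 ∧ a.1 ∈ Z a.2 t.2))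
    (hn2 : ¬(a.2 = t.2 ∧ adj a.1 t.1 ∧ a.2 ∈ Z a.1 t.1)) :
    psi adj c a.1 t.1 + psi adj c a.2 t.2 ≤ jsgCost c cbar cs Z a t := by
  obtain ⟨hA, hB⟩ := hadj
  by_cases he1 : a.1 = t.1
  · by_cases he2 : a.2 = t.2
    · unfold jsgCost
      rw [if_pos ⟨he1, he2⟩, he1, he2, psi_self hconn hc, psi_self hconn hc]
      simp
    · have hmv : adj a.2 t.2 := by
        rcases hB with h | h
        · exact absurd h.symm he2
        · exact h
      have hz : a.1 ∉ Z a.2 t.2 := fun h => hn1 ⟨he1, hmv, h⟩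
      unfold jsgCost
      rw [if_neg (fun h => he2 h.2), if_pos he1, if_neg hz]
      rw [he1, psi_self hconn hc]
      simpa using psi_le_c hc hmv
  · by_cases he2 : a.2 = t.2
    · have hmv : adj a.1 t.1 := by
        rcases hA with h | h
        · exact absurd h.symm he1
        · exact h
      have hz : a.2 ∉ Z a.1 t.1 := fun h => hn2 ⟨he2, hmv, h⟩
      unfold jsgCost
      rw [if_neg (fun h => he1 h.1), if_neg he1, if_pos he2, if_neg hz]
      rw [he2, psi_self hconn hc]
      simpa using psi_le_c hc hmv
    · have hmv1 : adj a.1 t.1 := by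
        rcases hA with h | h
        · exact absurd h.symm he1
        · exact h
      have hmv2 : adj a.2 t.2 := by
        rcases hB with h | h
        · exact absurd h.symm he2
        · exact h
      unfold jsgCost
      rw [if_neg (fun h => he1 h.1), if_neg he1, if_neg he2]
      exact add_le_add (psi_le_c hc hmv1) (psi_le_c hc hmv2)

lemma isPath_liftFst {a a' : V} (b : V) {p : List (V × V)} (hp : IsPath adj a a' p) :
    IsPath (jsgAdj adj) (a, b) (a', b) (p.map fun e => ((e.1, b), (e.2, b))) := by
  induction p generalizing a with
  | nil =>
      have h : _ = _ := hp
      subst h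
      exact rfl
  | cons e q ih =>
      obtain ⟨h1, h2, h3⟩ := hp
      exact ⟨by simp [h1], ⟨Or.inr h2, Or.inl rfl⟩, ih h3⟩

lemma isPath_liftSnd {b b' : V} (a : V) {p : List (V × V)} (hp : IsPath adj b b' p) :
    IsPath (jsgAdj adj) (a, b) (a, b') (p.map fun e => ((a, e.1), (a, e.2))) := by
  induction p generalizing b with
  | nil =>
      have h : _ = _ := hp
      subst h
      exact rfl
  | cons e q ih =>
      obtain ⟨h1, h2, h3⟩ := hp
      exact ⟨by simp [h1], ⟨Or.inl rfl, Or.inr h2⟩, ih h3⟩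

lemma jsg_path_exists (hconn : StronglyConnected adj) (s t : V × V) :
    ∃ u, IsPath (jsgAdj adj) s t u := by
  obtain ⟨p, hp⟩ := hconn s.1 t.1
  obtain ⟨q, hq⟩ := hconn s.2 t.2
  exact ⟨_, isPath_append (isPath_liftFst adj s.2 hp) (isPath_liftSnd adj t.1 hq)⟩

end Aux3
section Aux4

variable {V : Type}

lemma key_lemma (adj : V → V → Prop) (c cbar : V → V → ℝ) (cs : ℝ)
    (Z : V → V → Set V) (vstart vgoal : V)
    (hconn : StronglyConnected adj) (hc : ∀ i j, 0 ≤ c i j)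
    (hcbar : ∀ i j, 0 ≤ cbar i j) (hcs : 0 ≤ cs)
    (m' : V × V) (hm' : m' ∈ Mset adj Z vstart vgoal) :
    ∀ (u : List ((V × V) × (V × V))) (a s : V × V),
      s ∈ Mset adj Z vstart vgoal → IsPath (jsgAdj adj) a m' u →
      cjsgDist adj c cbar cs Z vstart vgoal s m' ≤
        psi adj c s.1 a.1 + psi adj c s.2 a.2 + Q c cbar cs Z u := by
  intro u
  induction u with
  | nil =>
      intro a s hs hu
      have hu' : a = m' := hu
      subst hu'
      have h1 := cjsgDist_le_W adj c cbar cs Z vstart vgoal hconn hc hcbar hcs s a hs hm'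
      have h2 := W_le_psipsi adj c cbar cs Z s a
      have : Q c cbar cs Z ([] : List ((V × V) × (V × V))) = 0 := by simp [Q]
      linarith
  | cons e rest ih =>
      intro a s hs hu
      obtain ⟨he1, hadj, hrest⟩ := hu
      set t := e.2 with ht
      have hQ : Q c cbar cs Z (e :: rest) = jsgCost c cbar cs Z a t + Q c cbar cs Z rest := by
        simp [Q, ← he1, ht]
      rw [hQ]
      by_cases heq : a = t
      · have hJ0 : jsgCost c cbar cs Z a t = 0 := by
          unfold jsgCost
          rw [if_pos ⟨by rw [heq], by rw [heq]⟩]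
        have := ih t s hs hrest
        have htr1 := psi_triangle hconn hc s.1 a.1 t.1
        have htr2 := psi_triangle hconn hc s.2 a.2 t.2
        have ha1 : psi adj c a.1 t.1 = 0 := by rw [heq]; exact psi_self hconn hc t.1
        have ha2 : psi adj c a.2 t.2 = 0 := by rw [heq]; exact psi_self hconn hc t.2
        linarith
      · by_cases hsup1 : a.1 = t.1 ∧ adj a.2 t.2 ∧ a.1 ∈ Z a.2 t.2
        · obtain ⟨hca, hct⟩ := supported1_critical adj Z hsup1.1 hsup1.2.1 hsup1.2.2
          have haM : a ∈ Mset adj Z vstart vgoal := Or.inl hca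
          have htM : t ∈ Mset adj Z vstart vgoal := Or.inl hct
          have hIH := ih t t htM hrest
          rw [psi_self hconn hc, psi_self hconn hc] at hIH
          have h1 := cjsgDist_triangle adj c cbar cs Z vstart vgoal hconn hc hcbar hcs
            a t m' haM htM hm'
          have h2 := W_le_jsgCost_supported1 adj c cbar cs Z hconn hc heq
            hsup1.1 hsup1.2.1 hsup1.2.2
          have h3 := cjsgDist_triangle adj c cbar cs Z vstart vgoal hconn hc hcbar hcs
            s a m' hs haM hm'
          have h4 := W_le_psipsi adj c cbar cs Z s a
          linarith
        · by_cases hsup2 : a.2 = t.2 ∧ adj a.1 t.1 ∧ a.2 ∈ Z a.1 t.1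
          · obtain ⟨hca, hct⟩ := supported2_critical adj Z hsup2.1 hsup2.2.1 hsup2.2.2
            have haM : a ∈ Mset adj Z vstart vgoal := Or.inl hca
            have htM : t ∈ Mset adj Z vstart vgoal := Or.inl hct
            have hIH := ih t t htM hrest
            rw [psi_self hconn hc, psi_self hconn hc] at hIH
            have h1 := cjsgDist_triangle adj c cbar cs Z vstart vgoal hconn hc hcbar hcs
              a t m' haM htM hm'
            have h2 := W_le_jsgCost_supported2 adj c cbar cs Z hconn hc heq
              hsup2.1 hsup2.2.1 hsup2.2.2
            have h3 := cjsgDist_triangle adj c cbar cs Z vstart vgoal hconn hc hcbar hcs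
              s a m' hs haM hm'
            have h4 := W_le_psipsi adj c cbar cs Z s a
            linarith
          · have hge := psipsi_le_jsgCost adj c cbar cs Z hconn hc
              (a := a) (t := t) (by rwa [he1] at hadj) hsup1 hsup2
            have hIH := ih t s hs hrest
            have htr1 := psi_triangle hconn hc s.1 a.1 t.1
            have htr2 := psi_triangle hconn hc s.2 a.2 t.2
            linarith

end Aux4

/-- The CJSG shortest-path cost between any two critical joint states is at
most the JSG shortest-path cost between those joint states. -/
theorem cjsg_dist_le_jsg_dist (adj : V → V → Prop) (c cbar : V → V → ℝ)
    (cs : ℝ) (Z : V → V → Set V) (vstart vgoal : V)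
    (hconn : StronglyConnected adj) (hc : ∀ i j, 0 ≤ c i j)
    (hcbar : ∀ i j, 0 ≤ cbar i j) (hcs : 0 ≤ cs)
    (m m' : V × V) (hm : m ∈ Mset adj Z vstart vgoal)
    (hm' : m' ∈ Mset adj Z vstart vgoal) :
    cjsgDist adj c cbar cs Z vstart vgoal m m' ≤
      jsgDist adj c cbar cs Z m m' := by
  obtain ⟨u0, hu0⟩ := jsg_path_exists adj hconn m m'
  refine le_csInf ⟨Q c cbar cs Z u0, u0, hu0, rfl⟩ ?_
  rintro x ⟨u, hu, rfl⟩
  have h := key_lemma adj c cbar cs Z vstart vgoal hconn hc hcbar hcs m' hm' u m m hm hu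
  rw [psi_self hconn hc, psi_self hconn hc] at h
  linarith
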